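/- arXiv:2511.02179 — 3 statements merged into one kernel-verified Lean document; each statement's English description precedes it below -/
import Mathlib

section
/- Let Z be a subset of [1,m] × [1,n], and let R be the polynomial ring over C in variables x_{ij} for (i,j) in ([1,m] × [1,n]) \ Z. Let G_2(Z) be the set of two-by-two minors of the generic m-by-n matrix whose (i,j) entry is x_{ij} for (i,j) not in Z and 0 for (i,j) in Z. Then G_2(Z) is a Gröbner basis of the ideal it generates with respect to the degree reverse lexicographic order induced by any total order on the variables. -/
/-!
Let `f` lie in the ideal `I` of minors, with initial exponent `u`, and suppose that no initial
monomial of a minor divides `x^u`. A move trades the diagonal `x_{ij} x_{kl}` of a 2 × 2 minor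
whose four entries are variables for its antidiagonal `x_{il} x_{kj}`; an exponent is killed if it
is divisible by the diagonal of a minor whose antidiagonal contains a structural zero. Being killed
depends only on the row and column sums, which moves preserve. The assumption on `u` says that `u`
is not killed and that no move lowers it in degrevlex.

Degrevlex-decreasing moves between non-killed exponents terminate and are locally confluent: the
only critical pair that does not close at once lives in a 3 × 3 block of variables, where it would
put two odd terms of the determinant below all three even ones, and the least of the nine variables
rules this out. By Newman's lemma `u` is the least element of its component `K` in the move graph.
Summing coefficients over `K` annihilates every `monomial * minor` (both terms lie in `K` or
neither does, or the only term is killed), hence annihilates `I`, yet it sends `f` to its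
nonzero leading coefficient.
-/

/-- The degree reverse lexicographic order (as a strict "greater than" relation on
exponent vectors) induced by a strict total order `vlt` on the variables, in which
`μ > ν` iff `deg μ > deg ν`, or the degrees agree and at the least variable (the
"rightmost" one) where `μ` and `ν` differ, `μ` has the smaller exponent. -/
def degRevLexGT {σ : Type*} (vlt : σ → σ → Prop) (μ ν : σ →₀ ℕ) : Prop :=
  (ν.sum fun _ k => k) < (μ.sum fun _ k => k) ∨
    ((μ.sum fun _ k => k) = (ν.sum fun _ k => k) ∧
      ∃ v, μ v < ν v ∧ ∀ w, vlt w v → μ w = ν w)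

/-- `d` is the initial (leading) exponent of `f` for the strict order `gt`. -/
def IsInitial {σ : Type*} (gt : (σ →₀ ℕ) → (σ →₀ ℕ) → Prop)
    (f : MvPolynomial σ ℂ) (d : σ →₀ ℕ) : Prop :=
  d ∈ f.support ∧ ∀ d' ∈ f.support, d' = d ∨ gt d d'

/-- The initial ideal of `I`: the ideal generated by the initial monomials of all
nonzero elements of `I`. -/
noncomputable def initialIdeal {σ : Type*} (gt : (σ →₀ ℕ) → (σ →₀ ℕ) → Prop)
    (I : Ideal (MvPolynomial σ ℂ)) : Ideal (MvPolynomial σ ℂ) :=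
  Ideal.span {m | ∃ f ∈ I, f ≠ 0 ∧ ∃ d, IsInitial gt f d ∧ m = MvPolynomial.monomial d 1}

/-- The `(a,b)` entry of the generic `m × n` matrix with prescribed zeros on `Z`. -/
noncomputable def genEntry {m n : ℕ} (Z : Set (Fin m × Fin n)) (a : Fin m) (b : Fin n) :
    MvPolynomial {p : Fin m × Fin n // p ∉ Z} ℂ :=
  open Classical in if h : (a, b) ∈ Z then 0 else MvPolynomial.X ⟨(a, b), h⟩

/-- The set of two-by-two minors of the generic `m × n` matrix with zeros on `Z`. -/
def minorsSet {m n : ℕ} (Z : Set (Fin m × Fin n)) :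
    Set (MvPolynomial {p : Fin m × Fin n // p ∉ Z} ℂ) :=
  {f | ∃ i k : Fin m, ∃ j l : Fin n, i < k ∧ j < l ∧
    f = genEntry Z i j * genEntry Z k l - genEntry Z i l * genEntry Z k j}

local notation:50 μ:51 " ≻ " ν:51 => degRevLexGT (· < ·) μ ν

namespace Relation

variable {α : Type*} {r : α → α → Prop}

theorem newman (wf : WellFounded (flip r))
    (lc : ∀ a b c, r a b → r a c → Join (ReflTransGen r) b c) {a b c : α}
    (hab : ReflTransGen r a b) (hac : ReflTransGen r a c) : Join (ReflTransGen r) b c := by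
  induction a using wf.induction generalizing b c with
  | _ a ih =>
    rcases hab.cases_head with rfl | ⟨b₁, hab₁, hb₁b⟩
    · exact ⟨c, hac, .refl⟩
    rcases hac.cases_head with rfl | ⟨c₁, hac₁, hc₁c⟩
    · exact ⟨b, .refl, hab⟩
    obtain ⟨d, hb₁d, hc₁d⟩ := lc a b₁ c₁ hab₁ hac₁
    obtain ⟨e, hbe, hde⟩ := ih b₁ hab₁ hb₁b hb₁d
    obtain ⟨f, hcf, hef⟩ := ih c₁ hac₁ hc₁c (hc₁d.trans hde)
    exact ⟨f, hbe.trans hef, hcf⟩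

theorem join_of_eqvGen (wf : WellFounded (flip r))
    (lc : ∀ a b c, r a b → r a c → Join (ReflTransGen r) b c) {a b : α} (h : EqvGen r a b) :
    Join (ReflTransGen r) a b :=
  ((equivalence_join fun _ _ _ => newman wf lc).eqvGen_iff).1 <|
    EqvGen.mono (fun _ b hab => ⟨b, .single hab, .refl⟩) a b h

end Relation

section Exponents

open Finsupp

variable {σ : Type*}

noncomputable def pairExp (a b : σ) : σ →₀ ℕ := single a 1 + single b 1

theorem pairExp_comm (a b : σ) : pairExp a b = pairExp b a := add_comm _ _

theorem pairExp_apply [DecidableEq σ] (a b x : σ) :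
    pairExp a b x = (if a = x then 1 else 0) + (if b = x then 1 else 0) := by
  simp [pairExp, single_apply]

theorem degree_pairExp (a b : σ) : degree (pairExp a b) = 2 := by
  simp [pairExp]

theorem sum_self_eq_degree (μ : σ →₀ ℕ) : (μ.sum fun _ k => k) = degree μ := rfl

theorem exists_eq_add_of_add_eq {τ₁ τ₂ μ ν : σ →₀ ℕ} (h : τ₁ + μ = τ₂ + ν)
    (hdisj : ∀ x, μ x = 0 ∨ ν x = 0) : ∃ ρ, τ₁ = ρ + ν ∧ τ₂ = ρ + μ := by
  have hle : ν ≤ τ₁ := fun x => by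
    have := DFunLike.congr_fun h x
    simp only [coe_add, Pi.add_apply] at this
    rcases hdisj x with h0 | h0 <;> omega
  obtain ⟨ρ, rfl⟩ := exists_add_of_le hle
  refine ⟨ρ, add_comm _ _, add_right_cancel (b := ν) ?_⟩
  rw [← h]
  abel

theorem pairExp_le {a b : σ} {u : σ →₀ ℕ} (hab : a ≠ b) (ha : a ∈ u.support)
    (hb : b ∈ u.support) : pairExp a b ≤ u := fun x => by
  classical
  rw [Finsupp.mem_support_iff] at ha hb
  simp only [pairExp_apply]
  split_ifs <;> subst_vars
  · exact (hab rfl).elim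
  all_goals omega

variable [LinearOrder σ]

theorem degRevLexGT_irrefl (μ : σ →₀ ℕ) : ¬ μ ≻ μ := by
  rintro (h | ⟨-, v, hv, -⟩) <;> omega

theorem degRevLexGT.degree_le {μ ν : σ →₀ ℕ} (h : μ ≻ ν) : degree ν ≤ degree μ := by
  rcases h with h | ⟨h, -⟩
  exacts [h.le, h.ge]

theorem degRevLexGT.trans {μ ν ρ : σ →₀ ℕ} (h₁ : μ ≻ ν) (h₂ : ν ≻ ρ) : μ ≻ ρ := by
  rcases h₁ with h₁ | ⟨hd₁, v₁, hv₁, hl₁⟩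
  · exact .inl (lt_of_le_of_lt h₂.degree_le h₁)
  rcases h₂ with h₂ | ⟨hd₂, v₂, hv₂, hl₂⟩
  · exact .inl (hd₁ ▸ h₂)
  refine .inr ⟨hd₁.trans hd₂, ?_⟩
  rcases lt_trichotomy v₁ v₂ with h | rfl | h
  · exact ⟨v₁, (hl₂ v₁ h) ▸ hv₁, fun w hw => (hl₁ w hw).trans (hl₂ w (hw.trans h))⟩
  · exact ⟨v₁, hv₁.trans hv₂, fun w hw => (hl₁ w hw).trans (hl₂ w hw)⟩
  · exact ⟨v₂, (hl₁ v₂ h).symm ▸ hv₂, fun w hw => (hl₁ w (hw.trans h)).trans (hl₂ w hw)⟩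

theorem degRevLexGT.asymm {μ ν : σ →₀ ℕ} (h₁ : μ ≻ ν) (h₂ : ν ≻ μ) : False :=
  degRevLexGT_irrefl μ (h₁.trans h₂)

theorem degRevLexGT_or_degRevLexGT_of_ne {μ ν : σ →₀ ℕ} (h : μ ≠ ν) : μ ≻ ν ∨ ν ≻ μ := by
  rcases lt_trichotomy (degree μ) (degree ν) with hd | hd | hd
  · exact .inr (.inl hd)
  · have hne : (μ.neLocus ν).Nonempty := nonempty_neLocus_iff.2 h
    set v := (μ.neLocus ν).min' hne
    have hv : μ v ≠ ν v := mem_neLocus.1 ((μ.neLocus ν).min'_mem hne)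
    have hlow : ∀ w, w < v → μ w = ν w := fun w hw => by
      by_contra hw'
      exact (not_le.2 hw) ((μ.neLocus ν).min'_le w (mem_neLocus.2 hw'))
    rcases hv.lt_or_gt with hlt | hlt
    · exact .inl (.inr ⟨hd, v, hlt, hlow⟩)
    · exact .inr (.inr ⟨hd.symm, v, hlt, fun w hw => (hlow w hw).symm⟩)
  · exact .inl (.inl hd)

theorem degRevLexGT_add_left_iff (τ μ ν : σ →₀ ℕ) : τ + μ ≻ τ + ν ↔ μ ≻ ν := by
  simp only [degRevLexGT, sum_self_eq_degree, map_add, coe_add, Pi.add_apply]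
  constructor
  · rintro (h | ⟨h, v, hv, hl⟩)
    · exact .inl (by omega)
    · exact .inr ⟨by omega, v, by omega, fun w hw => by have := hl w hw; omega⟩
  · rintro (h | ⟨h, v, hv, hl⟩)
    · exact .inl (by omega)
    · exact .inr ⟨by omega, v, by omega, fun w hw => by rw [hl w hw]⟩

theorem wellFounded_flip_degRevLexGT [Finite σ] :
    WellFounded (flip (degRevLexGT (· < ·) : (σ →₀ ℕ) → (σ →₀ ℕ) → Prop)) := by
  let below (μ : σ →₀ ℕ) : Set (σ →₀ ℕ) := {ν | degree ν ≤ degree μ ∧ μ ≻ ν}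
  have hfin (μ) : (below μ).Finite := (finite_of_degree_le (degree μ)).subset fun _ h => h.1
  refine Subrelation.wf (fun {ν μ} (h : μ ≻ ν) => ?_) (measure fun μ => (below μ).ncard).wf
  refine Set.ncard_lt_ncard ⟨fun ρ hρ => ⟨hρ.1.trans h.degree_le, h.trans hρ.2⟩,
    fun hsub => degRevLexGT_irrefl ν (hsub ⟨h.degree_le, h⟩).2⟩ (hfin μ)

theorem exists_lt_of_pairExp_degRevLexGT {a b c d : σ} (h : pairExp a b ≻ pairExp c d)
    (hac : a ≠ c) (had : a ≠ d) : c < a ∨ d < a := by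
  classical
  by_contra! hmin
  rcases h with h | ⟨-, v, hv, hl⟩
  · simp [sum_self_eq_degree, degree_pairExp] at h
  have hv' : v = c ∨ v = d := by
    by_contra! hcd
    simp [pairExp_apply, Ne.symm hcd.1, Ne.symm hcd.2] at hv
  have hav : a < v := by
    rcases hv' with rfl | rfl
    exacts [lt_of_le_of_ne hmin.1 hac, lt_of_le_of_ne hmin.2 had]
  have := hl a hav
  simp [pairExp_apply, hac.symm, had.symm] at this

/-- The hypotheses put the odd terms `x₀₁x₁₀x₂₂` and `x₀₂x₁₁x₂₀` of the determinant of `x` below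
each even term, every comparison reduced to quadratics by cancelling the common variable. -/
theorem false_of_degRevLexGT_3x3 {x : Fin 3 → Fin 3 → σ}
    (hx : Function.Injective (Function.uncurry x))
    (h₁ : pairExp (x 0 0) (x 1 1) ≻ pairExp (x 0 1) (x 1 0))
    (h₂ : pairExp (x 0 0) (x 2 2) ≻ pairExp (x 0 2) (x 2 0))
    (h₃ : pairExp (x 1 2) (x 2 0) ≻ pairExp (x 1 0) (x 2 2))
    (h₄ : pairExp (x 0 1) (x 1 2) ≻ pairExp (x 0 2) (x 1 1))
    (h₅ : pairExp (x 0 2) (x 2 1) ≻ pairExp (x 0 1) (x 2 2))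
    (h₆ : pairExp (x 1 0) (x 2 1) ≻ pairExp (x 1 1) (x 2 0)) : False := by
  have hne {r s r' s' : Fin 3} (h : (r, s) ≠ (r', s')) : x r s ≠ x r' s' := fun e => h (hx e)
  obtain ⟨⟨r, s⟩, -, hmin⟩ :=
    Finset.univ.exists_min_image (Function.uncurry x) Finset.univ_nonempty
  suffices ∃ r' s', x r' s' < x r s by
    obtain ⟨r', s', h⟩ := this
    exact (hmin (r', s') (Finset.mem_univ _)).not_gt h
  have below {a b : σ} {r' s' r'' s'' : Fin 3}
      (h : pairExp a b ≻ pairExp (x r' s') (x r'' s'')) (hab : a = x r s ∨ b = x r s)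
      (hne' : (r, s) ≠ (r', s') ∧ (r, s) ≠ (r'', s'')) : ∃ r' s', x r' s' < x r s := by
    rcases hab with rfl | rfl
    on_goal 2 => rw [pairExp_comm] at h
    all_goals
      rcases exists_lt_of_pairExp_degRevLexGT h (hne hne'.1) (hne hne'.2) with h | h
      exacts [⟨r', s', h⟩, ⟨r'', s'', h⟩]
  match r, s with
  | 0, 0 => exact below h₁ (.inl rfl) (by decide)
  | 1, 1 => exact below h₁ (.inr rfl) (by decide)
  | 2, 2 => exact below h₂ (.inr rfl) (by decide)
  | 1, 2 => exact below h₃ (.inl rfl) (by decide)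
  | 2, 0 => exact below h₃ (.inr rfl) (by decide)
  | 0, 1 => exact below h₄ (.inl rfl) (by decide)
  | 0, 2 => exact below h₅ (.inl rfl) (by decide)
  | 2, 1 => exact below h₅ (.inr rfl) (by decide)
  | 1, 0 => exact below h₆ (.inl rfl) (by decide)

end Exponents

section Initial

open MvPolynomial

variable {σ : Type*}

theorem X_mul_X_eq_monomial_pairExp {R : Type*} [CommSemiring R] (a b : σ) :
    (X a * X b : MvPolynomial σ R) = monomial (pairExp a b) 1 := by
  rw [X, X, monomial_mul, one_mul, pairExp]

variable {gt : (σ →₀ ℕ) → (σ →₀ ℕ) → Prop} {f : MvPolynomial σ ℂ} {d e : σ →₀ ℕ}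

theorem IsInitial.ne_zero (h : IsInitial gt f d) : f ≠ 0 :=
  ne_zero_iff.2 ⟨d, mem_support_iff.1 h.1⟩

theorem IsInitial.neg (h : IsInitial gt f d) : IsInitial gt (-f) d := by
  simpa only [IsInitial, support_neg] using h

theorem isInitial_monomial_one (d : σ →₀ ℕ) : IsInitial gt (monomial d (1 : ℂ)) d := by
  classical
  refine ⟨by simp, fun d' hd' => .inl ?_⟩
  simpa using support_monomial_subset hd'

theorem isInitial_monomial_sub_monomial (hne : d ≠ e) (hgt : gt d e) :
    IsInitial gt (monomial d (1 : ℂ) - monomial e 1) d := by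
  classical
  refine ⟨by simp [coeff_monomial, hne.symm], fun d' hd' => ?_⟩
  rw [mem_support_iff, coeff_sub, coeff_monomial, coeff_monomial] at hd'
  split_ifs at hd' <;> simp_all

theorem span_initialMonomials_eq_initialIdeal (G : Set (MvPolynomial σ ℂ))
    (h : ∀ f ∈ Ideal.span G, ∀ u, IsInitial gt f u → ∃ g ∈ G, ∃ e, IsInitial gt g e ∧ e ≤ u) :
    Ideal.span {mon | ∃ g ∈ G, g ≠ 0 ∧ ∃ d, IsInitial gt g d ∧ mon = monomial d 1} =
      initialIdeal gt (Ideal.span G) := by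
  refine le_antisymm (Ideal.span_mono ?_) (Ideal.span_le.2 ?_)
  · rintro _ ⟨g, hg, hg0, d, hd, rfl⟩
    exact ⟨g, Ideal.subset_span hg, hg0, d, hd, rfl⟩
  · rintro _ ⟨f, hf, -, u, hu, rfl⟩
    obtain ⟨g, hg, e, he, hle⟩ := h f hf u hu
    have hmon : monomial u (1 : ℂ) = monomial (u - e) 1 * monomial e 1 := by
      rw [monomial_mul, one_mul, tsub_add_cancel_of_le hle]
    rw [hmon]
    exact Ideal.mul_mem_left _ _ (Ideal.subset_span ⟨g, hg, he.ne_zero, e, he, rfl⟩)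

noncomputable def coeffSum {R : Type*} [CommSemiring R] (C : Set (σ →₀ ℕ)) :
    MvPolynomial σ R →ₗ[R] R :=
  Finsupp.linearCombination R (C.indicator 1) ∘ₗ
    (AddMonoidAlgebra.coeffLinearEquiv R).toLinearMap

variable {R : Type*} [CommSemiring R] {C : Set (σ →₀ ℕ)}

theorem coeffSum_monomial_of_mem (h : d ∈ C) (c : R) : coeffSum C (monomial d c) = c := by
  change Finsupp.linearCombination R (C.indicator 1) (Finsupp.single d c) = c
  simp [h]

theorem coeffSum_monomial_of_notMem (h : d ∉ C) (c : R) : coeffSum C (monomial d c) = 0 := by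
  change Finsupp.linearCombination R (C.indicator 1) (Finsupp.single d c) = 0
  simp [h]

theorem coeffSum_eq_coeff [LinearOrder σ] {u : σ →₀ ℕ}
    (hu : IsInitial (degRevLexGT (· < ·)) f u) (huC : u ∈ C) (hC : ∀ w ∈ C, w = u ∨ w ≻ u) :
    coeffSum C f = coeff u f := by
  conv_lhs => rw [f.as_sum]
  rw [map_sum, Finset.sum_eq_single u, coeffSum_monomial_of_mem huC]
  · intro w hw hwu
    refine coeffSum_monomial_of_notMem (fun hwC => ?_) _
    rcases hC w hwC with h₁ | h₁
    · exact hwu h₁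
    rcases hu.2 w hw with h₂ | h₂
    · exact hwu h₂
    exact h₁.asymm h₂
  · exact fun h => (h hu.1).elim

end Initial

namespace TwoMinors

open Finsupp Relation

abbrev Var {α β : Type*} (Z : Set (α × β)) : Type _ := {p : α × β // p ∉ Z}

section Moves

variable {α β : Type*} {Z : Set (α × β)}

/-- `x_a x_b` and `x_c x_d` are the two terms of a 2 × 2 minor whose entries are all variables. -/
def IsSwap (a b c d : Var Z) : Prop :=
  a.1.1 ≠ b.1.1 ∧ a.1.2 ≠ b.1.2 ∧ c.1 = (a.1.1, b.1.2) ∧ d.1 = (b.1.1, a.1.2)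

def Move (w w' : Var Z →₀ ℕ) : Prop :=
  ∃ τ a b c d, IsSwap a b c d ∧ w = τ + pairExp a b ∧ w' = τ + pairExp c d

/-- `x^w` is divisible by some `x_a x_b` whose minor is the monomial `x_a x_b`, the corner
`(row a, col b)` being a structural zero. -/
def Killed (w : Var Z →₀ ℕ) : Prop :=
  ∃ a ∈ w.support, ∃ b ∈ w.support, (a.1.1, b.1.2) ∈ Z

noncomputable def rowSums (w : Var Z →₀ ℕ) : α →₀ ℕ := w.mapDomain (·.1.1)

noncomputable def colSums (w : Var Z →₀ ℕ) : β →₀ ℕ := w.mapDomain (·.1.2)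

variable {a b c d c' d' : Var Z} {w w' x y τ : Var Z →₀ ℕ}

namespace IsSwap

theorem symm (h : IsSwap a b c d) : IsSwap c d a b := by
  obtain ⟨hr, hc, hc', hd'⟩ := h
  refine ⟨?_, ?_, ?_, ?_⟩ <;> rw [hc', hd']
  exacts [hr, Ne.symm hc]

theorem swap (h : IsSwap a b c d) : IsSwap b a d c := by
  obtain ⟨hr, hc, hc', hd'⟩ := h
  exact ⟨Ne.symm hr, Ne.symm hc, hd', hc'⟩

theorem unique (h : IsSwap a b c d) (h' : IsSwap a b c' d') : c = c' ∧ d = d' :=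
  ⟨Subtype.ext (h.2.2.1.trans h'.2.2.1.symm), Subtype.ext (h.2.2.2.trans h'.2.2.2.symm)⟩

theorem pairExp_ne (h : IsSwap a b c d) : pairExp a b ≠ pairExp c d := by
  classical
  obtain ⟨hr, hcol, hc, hd⟩ := h
  have hac : c ≠ a := fun e => by simp_all [Prod.ext_iff]
  have had : d ≠ a := fun e => by simp_all [Prod.ext_iff]
  intro e
  have := DFunLike.congr_fun e a
  simp [pairExp_apply, hac, had] at this

end IsSwap

namespace Move

theorem of_isSwap (h : IsSwap a b c d) (hw : w = τ + pairExp a b) (hw' : w' = τ + pairExp c d) :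
    Move w w' :=
  ⟨τ, a, b, c, d, h, hw, hw'⟩

theorem symm (h : Move w w') : Move w' w := by
  obtain ⟨τ, a, b, c, d, hs, rfl, rfl⟩ := h
  exact of_isSwap hs.symm rfl rfl

theorem ne (h : Move w w') : w ≠ w' := by
  obtain ⟨τ, a, b, c, d, hs, rfl, rfl⟩ := h
  exact fun e => hs.pairExp_ne (add_left_cancel e)

theorem add_left (h : Move w w') (ρ : Var Z →₀ ℕ) : Move (ρ + w) (ρ + w') := by
  obtain ⟨τ, a, b, c, d, hs, rfl, rfl⟩ := h
  exact of_isSwap hs (add_assoc ρ τ _).symm (add_assoc ρ τ _).symm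

theorem rowSums_eq (h : Move w w') : rowSums w = rowSums w' := by
  obtain ⟨τ, a, b, c, d, ⟨-, -, hc, hd⟩, rfl, rfl⟩ := h
  simp [rowSums, pairExp, mapDomain_add, mapDomain_single, hc, hd]

theorem colSums_eq (h : Move w w') : colSums w = colSums w' := by
  obtain ⟨τ, a, b, c, d, ⟨-, -, hc, hd⟩, rfl, rfl⟩ := h
  simp [colSums, pairExp, mapDomain_add, mapDomain_single, hc, hd, add_comm]

end Move

theorem killed_iff_rowSums_colSums :
    Killed w ↔ ∃ p ∈ Z, p.1 ∈ (rowSums w).support ∧ p.2 ∈ (colSums w).support := by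
  classical
  simp only [Killed, rowSums, colSums, mapDomain_support_of_subsingletonAddUnits,
    Finset.mem_image]
  constructor
  · rintro ⟨a, ha, b, hb, hZ⟩
    exact ⟨_, hZ, ⟨a, ha, rfl⟩, ⟨b, hb, rfl⟩⟩
  · rintro ⟨p, hZ, ⟨a, ha, ha'⟩, ⟨b, hb, hb'⟩⟩
    exact ⟨a, ha, b, hb, by rwa [ha', hb']⟩

theorem Move.killed_iff (h : Move w w') : Killed w ↔ Killed w' := by
  rw [killed_iff_rowSums_colSums, killed_iff_rowSums_colSums, h.rowSums_eq, h.colSums_eq]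

theorem killed_iff_of_reflTransGen (h : ReflTransGen Move w w') : Killed w ↔ Killed w' := by
  induction h with
  | refl => rfl
  | tail _ hm ih => exact ih.trans hm.killed_iff

theorem Killed.add_left (h : Killed w) (τ : Var Z →₀ ℕ) : Killed (τ + w) := by
  obtain ⟨a, ha, b, hb, hZ⟩ := h
  refine ⟨a, ?_, b, ?_, hZ⟩ <;> simp_all [mem_support_iff]

theorem killed_pairExp (h : (a.1.1, b.1.2) ∈ Z) : Killed (pairExp a b) := by
  classical
  refine ⟨a, ?_, b, ?_, h⟩ <;> simp [pairExp_apply]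

end Moves

section Reduction

variable {α β : Type*} {Z : Set (α × β)} [LinearOrder (Var Z)]
variable {a b b' c d c' d' : Var Z} {u w x y z τ : Var Z →₀ ℕ}

def MoveDown (w w' : Var Z →₀ ℕ) : Prop := Move w w' ∧ w ≻ w'

theorem MoveDown.add_left (h : MoveDown x y) (τ : Var Z →₀ ℕ) : MoveDown (τ + x) (τ + y) :=
  ⟨h.1.add_left τ, (degRevLexGT_add_left_iff τ x y).2 h.2⟩

theorem join_moveDown_add_left (h : Join (ReflTransGen MoveDown) x y) (τ : Var Z →₀ ℕ) :
    Join (ReflTransGen MoveDown) (τ + x) (τ + y) := by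
  obtain ⟨z, hxz, hyz⟩ := h
  exact ⟨τ + z, hxz.lift _ fun _ _ h => h.add_left τ, hyz.lift _ fun _ _ h => h.add_left τ⟩

theorem Move.moveDown_or_moveDown (h : Move x y) : MoveDown x y ∨ MoveDown y x :=
  (degRevLexGT_or_degRevLexGT_of_ne h.ne).imp (⟨h, ·⟩) (⟨h.symm, ·⟩)

theorem Move.join_moveDown (h : Move x y) : Join (ReflTransGen MoveDown) x y := by
  rcases h.moveDown_or_moveDown with h | h
  exacts [⟨y, .single h, .refl⟩, ⟨x, .refl, .single h⟩]

theorem join_moveDown_or_degRevLexGT {a₁ b₁ c₁ d₁ a₂ b₂ c₂ d₂ : Var Z} {τ₁ τ₂ : Var Z →₀ ℕ}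
    (hs₁ : IsSwap a₁ b₁ c₁ d₁) (hs₂ : IsSwap a₂ b₂ c₂ d₂) (hx : x = τ₁ + pairExp a₁ b₁)
    (hy : y = τ₂ + pairExp a₂ b₂) (hz : τ₁ + pairExp c₁ d₁ = τ₂ + pairExp c₂ d₂) :
    Join (ReflTransGen MoveDown) x y ∨
      (pairExp c₁ d₁ ≻ pairExp a₁ b₁ ∧ pairExp c₂ d₂ ≻ pairExp a₂ b₂) := by
  have hxz := Move.of_isSwap hs₁ hx rfl
  have hyz := Move.of_isSwap hs₂ hy hz
  subst hx hy
  rcases hxz.moveDown_or_moveDown with hxz | hxz <;>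
    rcases hyz.moveDown_or_moveDown with hyz | hyz
  · exact .inl ⟨_, .single hxz, .single hyz⟩
  · exact .inl ⟨_, .head hxz (.single hyz), .refl⟩
  · exact .inl ⟨_, .refl, .head hyz (.single hxz)⟩
  · rw [hz] at hyz
    exact .inr ⟨(degRevLexGT_add_left_iff _ _ _).1 hxz.2,
      (degRevLexGT_add_left_iff _ _ _).1 hyz.2⟩

/-- The critical pair of the two moves from `x₀₀x₁₁x₂₂` that use `x₀₀`. -/
theorem join_moveDown_of_block {x : Fin 3 → Fin 3 → Var Z} {R : Fin 3 → α} {C : Fin 3 → β}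
    (hR : Function.Injective R) (hC : Function.Injective C) (hx : ∀ r s, (x r s).1 = (R r, C s))
    (hgt : pairExp (x 0 0) (x 1 1) ≻ pairExp (x 0 1) (x 1 0))
    (hgt' : pairExp (x 0 0) (x 2 2) ≻ pairExp (x 0 2) (x 2 0)) :
    Join (ReflTransGen MoveDown) (pairExp (x 0 1) (x 1 0) + single (x 2 2) 1)
      (pairExp (x 0 2) (x 2 0) + single (x 1 1) 1) := by
  have swap {r r' s s' : Fin 3} (hr : r ≠ r') (hs : s ≠ s') :
      IsSwap (x r s) (x r' s') (x r s') (x r' s) := by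
    simp [IsSwap, hx, hR.ne hr, hC.ne hs]
  refine (join_moveDown_or_degRevLexGT (τ₁ := single (x 0 1) 1)
    (τ₂ := single (x 2 0) 1) (swap (r := 1) (s := 0) (r' := 2) (s' := 2) (by decide) (by decide))
    (swap (r := 0) (s := 2) (r' := 1) (s' := 1) (by decide) (by decide))
    (by simp only [pairExp]; abel) (by simp only [pairExp]; abel)
    (by simp only [pairExp]; abel)).elim id fun ⟨h₃, h₄⟩ => ?_
  refine (join_moveDown_or_degRevLexGT (τ₁ := single (x 1 0) 1)
    (τ₂ := single (x 0 2) 1) (swap (r := 0) (s := 1) (r' := 2) (s' := 2) (by decide) (by decide))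
    (swap (r := 1) (s := 1) (r' := 2) (s' := 0) (by decide) (by decide))
    (by simp only [pairExp]; abel) (by simp only [pairExp]; abel)
    (by simp only [pairExp]; abel)).elim id fun ⟨h₅, h₆⟩ => ?_
  refine (false_of_degRevLexGT_3x3 (fun _ _ h => ?_) hgt hgt' h₃ h₄ h₅ h₆).elim
  have h' := congrArg Subtype.val h
  simp only [Function.uncurry, hx, Prod.mk.injEq] at h'
  exact Prod.ext (hR h'.1) (hC h'.2)

theorem join_moveDown_of_shared_cell (hk : ¬ Killed (pairExp a b + single b' 1))
    (hs : IsSwap a b c d) (hs' : IsSwap a b' c' d') (hbb' : b ≠ b')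
    (hgt : pairExp a b ≻ pairExp c d) (hgt' : pairExp a b' ≻ pairExp c' d') :
    Join (ReflTransGen MoveDown) (pairExp c d + single b' 1) (pairExp c' d' + single b 1) := by
  obtain ⟨⟨i, j⟩, ha⟩ := a
  obtain ⟨⟨k, l⟩, hb⟩ := b
  obtain ⟨⟨p, q⟩, hb'⟩ := b'
  obtain ⟨hik, hjl, hc, hd⟩ := hs
  obtain ⟨hip, hjq, hc', hd'⟩ := hs'
  obtain ⟨_, hcZ⟩ := c
  obtain ⟨_, hdZ⟩ := d
  obtain ⟨_, hc'Z⟩ := c'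
  obtain ⟨_, hd'Z⟩ := d'
  dsimp only at hik hjl hip hjq hc hd hc' hd'
  subst hc hd hc' hd'
  set b : Var Z := ⟨(k, l), hb⟩
  set b' : Var Z := ⟨(p, q), hb'⟩
  set c : Var Z := ⟨(i, l), hcZ⟩
  set d : Var Z := ⟨(k, j), hdZ⟩
  set c' : Var Z := ⟨(i, q), hc'Z⟩
  set d' : Var Z := ⟨(p, j), hd'Z⟩
  by_cases hkp : k = p
  · subst hkp
    have hlq : l ≠ q := fun h => hbb' (by subst h; rfl)
    refine (Move.of_isSwap (τ := single d 1) (⟨hik, hlq, rfl, rfl⟩ : IsSwap c b' c' b)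
      ?_ ?_).join_moveDown <;> simp only [pairExp] <;> abel
  by_cases hlq : l = q
  · subst hlq
    refine (Move.of_isSwap (τ := single c 1) (⟨hkp, hjl, rfl, rfl⟩ : IsSwap d b' b d')
      ?_ ?_).join_moveDown <;> simp only [pairExp] <;> abel
  have hkq : (k, q) ∉ Z := fun h => hk ⟨b, by simp [pairExp], b', by simp [pairExp], h⟩
  have hpl : (p, l) ∉ Z := fun h => hk ⟨b', by simp [pairExp], b, by simp [pairExp], h⟩
  have hrow : Function.Injective ![i, k, p] := by
    simp [Function.Injective, Fin.forall_fin_succ, hik, hip, hkp, Ne.symm hik, Ne.symm hip,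
      Ne.symm hkp]
  have hcol : Function.Injective ![j, l, q] := by
    simp [Function.Injective, Fin.forall_fin_succ, hjl, hjq, hlq, Ne.symm hjl, Ne.symm hjq,
      Ne.symm hlq]
  have hmem (r s : Fin 3) : (![i, k, p] r, ![j, l, q] s) ∉ Z := by
    fin_cases r <;> fin_cases s <;> assumption
  let x (r s : Fin 3) : Var Z := ⟨(![i, k, p] r, ![j, l, q] s), hmem r s⟩
  exact join_moveDown_of_block (x := x) hrow hcol (fun _ _ => rfl) hgt hgt'

theorem MoveDown.of_isSwap (hs : IsSwap a b c d) (hgt : pairExp a b ≻ pairExp c d)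
    (τ : Var Z →₀ ℕ) : MoveDown (τ + pairExp a b) (τ + pairExp c d) :=
  ⟨.of_isSwap hs rfl rfl, (degRevLexGT_add_left_iff τ _ _).2 hgt⟩

theorem join_moveDown_of_shared {τ₁ τ₂ : Var Z →₀ ℕ}
    (hw : ¬ Killed (τ₁ + pairExp a b)) (heq : τ₁ + pairExp a b = τ₂ + pairExp a b')
    (hs : IsSwap a b c d) (hs' : IsSwap a b' c' d') (hgt : pairExp a b ≻ pairExp c d)
    (hgt' : pairExp a b' ≻ pairExp c' d') :
    Join (ReflTransGen MoveDown) (τ₁ + pairExp c d) (τ₂ + pairExp c' d') := by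
  by_cases hbb' : b = b'
  · subst hbb'
    obtain ⟨rfl, rfl⟩ := hs.unique hs'
    rw [add_right_cancel heq]
    exact ⟨_, .refl, .refl⟩
  have heq' : τ₁ + single b 1 = τ₂ + single b' 1 :=
    add_right_cancel (b := single a 1) (by simp only [pairExp] at heq; convert heq using 1 <;> abel)
  obtain ⟨ρ, rfl, rfl⟩ := exists_eq_add_of_add_eq heq' fun v => by
    classical
    simp only [single_apply]
    split_ifs <;> simp_all
  have hk : ¬ Killed (pairExp a b + single b' 1) := fun hk =>
    hw (by convert hk.add_left ρ using 1; abel)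
  rw [add_right_comm, add_assoc, add_right_comm ρ, add_assoc ρ]
  exact join_moveDown_add_left (join_moveDown_of_shared_cell hk hs hs' hbb' hgt hgt') ρ

theorem MoveDown.join_of_not_killed (hw : ¬ Killed w) (hx : MoveDown w x) (hy : MoveDown w y) :
    Join (ReflTransGen MoveDown) x y := by
  obtain ⟨⟨τ₁, a₁, b₁, c₁, d₁, hs₁, rfl, rfl⟩, hgt₁⟩ := hx
  obtain ⟨⟨τ₂, a₂, b₂, c₂, d₂, hs₂, heq, rfl⟩, hgt₂⟩ := hy
  rw [degRevLexGT_add_left_iff] at hgt₁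
  rw [heq, degRevLexGT_add_left_iff] at hgt₂
  by_cases hshared : a₁ = a₂ ∨ a₁ = b₂ ∨ b₁ = a₂ ∨ b₁ = b₂
  · rcases hshared with rfl | rfl | rfl | rfl
    · exact join_moveDown_of_shared hw heq hs₁ hs₂ hgt₁ hgt₂
    · rw [pairExp_comm a₂] at heq hgt₂
      rw [pairExp_comm c₂] at hgt₂ ⊢
      exact join_moveDown_of_shared hw heq hs₁ hs₂.swap hgt₁ hgt₂
    · rw [pairExp_comm a₁] at hw heq hgt₁
      rw [pairExp_comm c₁] at hgt₁ ⊢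
      exact join_moveDown_of_shared hw heq hs₁.swap hs₂ hgt₁ hgt₂
    · rw [pairExp_comm a₁] at hw heq hgt₁
      rw [pairExp_comm c₁] at hgt₁ ⊢
      rw [pairExp_comm a₂] at heq hgt₂
      rw [pairExp_comm c₂] at hgt₂ ⊢
      exact join_moveDown_of_shared hw heq hs₁.swap hs₂.swap hgt₁ hgt₂
  simp only [not_or] at hshared
  obtain ⟨ρ, rfl, rfl⟩ := exists_eq_add_of_add_eq heq fun v => by
    classical
    simp only [pairExp_apply]
    split_ifs <;> simp_all
  refine ⟨ρ + pairExp c₁ d₁ + pairExp c₂ d₂, .single ?_, .single ?_⟩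
  · convert MoveDown.of_isSwap hs₂ hgt₂ (ρ + pairExp c₁ d₁) using 1
    abel
  · convert MoveDown.of_isSwap hs₁ hgt₁ (ρ + pairExp c₂ d₂) using 1 <;> abel

def Red (w w' : Var Z →₀ ℕ) : Prop := ¬ Killed w ∧ MoveDown w w'

theorem reflTransGen_red_of_moveDown (hx : ¬ Killed x) (h : ReflTransGen MoveDown x y) :
    ReflTransGen Red x y := by
  induction h with
  | refl => exact .refl
  | tail hxy hyz ih =>
    refine ih.tail ⟨fun hy => hx ?_, hyz⟩
    exact (killed_iff_of_reflTransGen (ReflTransGen.mono (fun _ _ h => h.1) _ _ hxy)).2 hy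

theorem Red.join (hx : Red w x) (hy : Red w y) : Join (ReflTransGen Red) x y := by
  obtain ⟨z, hxz, hyz⟩ := MoveDown.join_of_not_killed hx.1 hx.2 hy.2
  exact ⟨z, reflTransGen_red_of_moveDown (fun h => hx.1 (hx.2.1.killed_iff.2 h)) hxz,
    reflTransGen_red_of_moveDown (fun h => hy.1 (hy.2.1.killed_iff.2 h)) hyz⟩

theorem wellFounded_flip_red [Finite α] [Finite β] : WellFounded (flip (Red (Z := Z))) :=
  Subrelation.wf (fun h => h.2.2) wellFounded_flip_degRevLexGT

theorem eq_or_degRevLexGT_of_reflTransGen_move [Finite α] [Finite β] (hu : ¬ Killed u)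
    (hnf : ∀ w, ¬ MoveDown u w) (h : ReflTransGen Move u w) : w = u ∨ w ≻ u := by
  have hred : EqvGen Red u w := by
    induction h with
    | refl => exact .refl _
    | tail hux hxy ih =>
      have hx : ¬ Killed _ := fun hk => hu ((killed_iff_of_reflTransGen hux).2 hk)
      rcases hxy.moveDown_or_moveDown with h | h
      · exact ih.trans _ _ _ (.rel _ _ ⟨hx, h⟩)
      · exact ih.trans _ _ _ (.symm _ _ (.rel _ _ ⟨fun hk => hx (hxy.killed_iff.2 hk), h⟩))
  obtain ⟨z, huz, hwz⟩ := join_of_eqvGen wellFounded_flip_red (fun _ _ _ => Red.join) hred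
  obtain rfl : z = u := by
    rcases huz.cases_head with h | ⟨v, huv, -⟩
    exacts [h.symm, (hnf v huv.2).elim]
  clear h hred
  induction hwz using ReflTransGen.head_induction_on with
  | refl => exact .inl rfl
  | head hwv _ ih => exact .inr (ih.elim (· ▸ hwv.2.2) hwv.2.2.trans)

end Reduction

section Minors

open MvPolynomial

variable {m n : ℕ} {Z : Set (Fin m × Fin n)} {i k : Fin m} {j l : Fin n}

noncomputable def minor (Z : Set (Fin m × Fin n)) (i k : Fin m) (j l : Fin n) :
    MvPolynomial (Var Z) ℂ :=
  genEntry Z i j * genEntry Z k l - genEntry Z i l * genEntry Z k j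

theorem genEntry_of_mem (h : (i, j) ∈ Z) : genEntry Z i j = 0 := dif_pos h

theorem genEntry_of_notMem (h : (i, j) ∉ Z) : genEntry Z i j = X ⟨(i, j), h⟩ := dif_neg h

theorem minor_mem_or_neg_mem_minorsSet (hik : i ≠ k) (hjl : j ≠ l) :
    minor Z i k j l ∈ minorsSet Z ∨ -minor Z i k j l ∈ minorsSet Z := by
  rcases hik.lt_or_gt with hik | hik <;> rcases hjl.lt_or_gt with hjl | hjl
  · exact .inl ⟨i, k, j, l, hik, hjl, rfl⟩
  · exact .inr ⟨i, k, l, j, hik, hjl, by rw [minor]; ring⟩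
  · exact .inr ⟨k, i, j, l, hik, hjl, by rw [minor]; ring⟩
  · exact .inl ⟨k, i, l, j, hik, hjl, by rw [minor]; ring⟩

variable {C : Set (Var Z →₀ ℕ)}

theorem coeffSum_monomial_mul_genEntry_mul_genEntry (hC : ∀ w ∈ C, ¬ Killed w)
    {r₁ r₂ : Fin m} {c₁ c₂ : Fin n}
    (h : ¬ ((r₁, c₁) ∉ Z ∧ (r₂, c₂) ∉ Z ∧ (r₁, c₂) ∉ Z ∧ (r₂, c₁) ∉ Z)) (v : Var Z →₀ ℕ) (c : ℂ) :
    coeffSum C (monomial v c * (genEntry Z r₁ c₁ * genEntry Z r₂ c₂)) = 0 := by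
  by_cases h₁ : (r₁, c₁) ∈ Z
  · simp [genEntry_of_mem h₁]
  by_cases h₂ : (r₂, c₂) ∈ Z
  · simp [genEntry_of_mem h₂]
  rw [genEntry_of_notMem h₁, genEntry_of_notMem h₂, X_mul_X_eq_monomial_pairExp, monomial_mul,
    mul_one]
  refine coeffSum_monomial_of_notMem (fun hv => hC _ hv ?_) c
  rcases (by tauto : (r₁, c₂) ∈ Z ∨ (r₂, c₁) ∈ Z) with hZ | hZ
  · exact (killed_pairExp hZ).add_left v
  · rw [pairExp_comm]
    exact (killed_pairExp hZ).add_left v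

theorem coeffSum_monomial_mul_minor (hmove : ∀ w w', Move w w' → w ∈ C → w' ∈ C)
    (hC : ∀ w ∈ C, ¬ Killed w) (hik : i ≠ k) (hjl : j ≠ l) (v : Var Z →₀ ℕ) (c : ℂ) :
    coeffSum C (monomial v c * minor Z i k j l) = 0 := by
  rw [minor, mul_sub, map_sub, sub_eq_zero]
  by_cases hall : (i, j) ∉ Z ∧ (k, l) ∉ Z ∧ (i, l) ∉ Z ∧ (k, j) ∉ Z
  · obtain ⟨h₁, h₂, h₃, h₄⟩ := hall
    rw [genEntry_of_notMem h₁, genEntry_of_notMem h₂, genEntry_of_notMem h₃,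
      genEntry_of_notMem h₄, X_mul_X_eq_monomial_pairExp, X_mul_X_eq_monomial_pairExp,
      monomial_mul, monomial_mul, mul_one]
    have hm := Move.of_isSwap (τ := v) (a := ⟨(i, j), h₁⟩) (b := ⟨(k, l), h₂⟩)
      (c := ⟨(i, l), h₃⟩) (d := ⟨(k, j), h₄⟩) ⟨hik, hjl, rfl, rfl⟩ rfl rfl
    by_cases hv : v + pairExp ⟨(i, j), h₁⟩ ⟨(k, l), h₂⟩ ∈ C
    · rw [coeffSum_monomial_of_mem hv, coeffSum_monomial_of_mem (hmove _ _ hm hv)]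
    · rw [coeffSum_monomial_of_notMem hv,
        coeffSum_monomial_of_notMem fun h => hv (hmove _ _ hm.symm h)]
  · rw [coeffSum_monomial_mul_genEntry_mul_genEntry hC hall,
      coeffSum_monomial_mul_genEntry_mul_genEntry hC (by tauto)]

theorem coeffSum_eq_zero_of_mem_span (hmove : ∀ w w', Move w w' → w ∈ C → w' ∈ C)
    (hC : ∀ w ∈ C, ¬ Killed w) {f : MvPolynomial (Var Z) ℂ} (hf : f ∈ Ideal.span (minorsSet Z)) :
    coeffSum C f = 0 := by
  have key : ∀ g ∈ minorsSet Z, ∀ p, coeffSum C (p * g) = 0 := by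
    rintro _ ⟨i, k, j, l, hik, hjl, rfl⟩ p
    induction p using MvPolynomial.induction_on' with
    | monomial v c => exact coeffSum_monomial_mul_minor hmove hC hik.ne hjl.ne v c
    | add p q hp hq => rw [add_mul, map_add, hp, hq, add_zero]
  obtain ⟨_, c, g, rfl⟩ := Submodule.mem_span_set'.1 hf
  simp only [map_sum, smul_eq_mul]
  exact Finset.sum_eq_zero fun i _ => key _ (g i).2 _

-- `Var Z` also inherits the product order of `Fin m × Fin n`, which `(· < ·)` would pick up;
-- the variable order is therefore referred to by name.
variable [r : LinearOrder (Var Z)] {u w : Var Z →₀ ℕ}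

theorem exists_isInitial_minor (a b : Var Z) (hr : a.1.1 ≠ b.1.1) (hc : a.1.2 ≠ b.1.2)
    (hgt : ∀ c d, IsSwap a b c d → degRevLexGT r.lt (pairExp a b) (pairExp c d)) :
    ∃ g ∈ minorsSet Z, IsInitial (degRevLexGT r.lt) g (pairExp a b) := by
  have hdiag : genEntry Z a.1.1 a.1.2 * genEntry Z b.1.1 b.1.2 = monomial (pairExp a b) 1 := by
    rw [genEntry_of_notMem a.2, genEntry_of_notMem b.2, X_mul_X_eq_monomial_pairExp]
  have hinit : IsInitial (degRevLexGT r.lt) (minor Z a.1.1 b.1.1 a.1.2 b.1.2) (pairExp a b) := by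
    rw [minor, hdiag]
    by_cases hcd : (a.1.1, b.1.2) ∉ Z ∧ (b.1.1, a.1.2) ∉ Z
    · have hs : IsSwap a b ⟨_, hcd.1⟩ ⟨_, hcd.2⟩ := ⟨hr, hc, rfl, rfl⟩
      rw [genEntry_of_notMem hcd.1, genEntry_of_notMem hcd.2, X_mul_X_eq_monomial_pairExp]
      exact isInitial_monomial_sub_monomial hs.pairExp_ne (hgt _ _ hs)
    · have hanti : genEntry Z a.1.1 b.1.2 * genEntry Z b.1.1 a.1.2 = 0 := by
        rcases not_and_or.1 hcd with h | h
        · rw [genEntry_of_mem (not_not.1 h), zero_mul]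
        · rw [genEntry_of_mem (not_not.1 h), mul_zero]
      rw [hanti, sub_zero]
      exact isInitial_monomial_one _
  rcases minor_mem_or_neg_mem_minorsSet (Z := Z) hr hc with hm | hm
  exacts [⟨_, hm, hinit⟩, ⟨_, hm, hinit.neg⟩]

theorem exists_isInitial_minor_le_of_killed (h : Killed u) :
    ∃ g ∈ minorsSet Z, ∃ e, IsInitial (degRevLexGT r.lt) g e ∧ e ≤ u := by
  obtain ⟨a, ha, b, hb, hZ⟩ := h
  have hr : a.1.1 ≠ b.1.1 := fun e => b.2 (by rwa [e] at hZ)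
  have hc : a.1.2 ≠ b.1.2 := fun e => a.2 (by rwa [← e] at hZ)
  obtain ⟨g, hg, hinit⟩ := exists_isInitial_minor a b hr hc fun c _ hs => (c.2 (hs.2.2.1 ▸ hZ)).elim
  exact ⟨g, hg, _, hinit, pairExp_le (fun e => hr (e ▸ rfl)) ha hb⟩

theorem exists_isInitial_minor_le_of_moveDown (h : MoveDown u w) :
    ∃ g ∈ minorsSet Z, ∃ e, IsInitial (degRevLexGT r.lt) g e ∧ e ≤ u := by
  obtain ⟨⟨τ, a, b, c, d, hs, rfl, rfl⟩, hgt⟩ := h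
  rw [degRevLexGT_add_left_iff] at hgt
  obtain ⟨g, hg, hinit⟩ := exists_isInitial_minor a b hs.1 hs.2.1 fun c' d' hs' => by
    obtain ⟨rfl, rfl⟩ := hs.unique hs'
    exact hgt
  exact ⟨g, hg, _, hinit, le_add_self⟩

theorem exists_isInitial_minor_le {f : MvPolynomial (Var Z) ℂ}
    (hf : f ∈ Ideal.span (minorsSet Z)) (hu : IsInitial (degRevLexGT r.lt) f u) :
    ∃ g ∈ minorsSet Z, ∃ e, IsInitial (degRevLexGT r.lt) g e ∧ e ≤ u := by
  by_contra hstd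
  have hK : ¬ Killed u := fun h => hstd (exists_isInitial_minor_le_of_killed h)
  have hnf : ∀ w, ¬ MoveDown u w := fun _ h => hstd (exists_isInitial_minor_le_of_moveDown h)
  have hzero := coeffSum_eq_zero_of_mem_span (C := {w | Relation.ReflTransGen Move u w})
    (fun _ _ hm hw => hw.tail hm) (fun _ hw hk => hK ((killed_iff_of_reflTransGen hw).2 hk)) hf
  rw [coeffSum_eq_coeff hu (show u ∈ {w | Relation.ReflTransGen Move u w} from .refl)
    fun _ hw => eq_or_degRevLexGT_of_reflTransGen_move hK hnf hw] at hzero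
  exact MvPolynomial.mem_support_iff.1 hu.1 hzero

end Minors

end TwoMinors

/-- The two-by-two minors of the generic `m × n` matrix with prescribed zero
entries form a universal degree revlex Gröbner basis of the ideal they generate:
for every total order on the variables, the initial monomials of the minors
generate the initial ideal. -/
theorem stmt6 (m n : ℕ) (Z : Set (Fin m × Fin n))
    (r : LinearOrder {p : Fin m × Fin n // p ∉ Z}) :
    Ideal.span {mon : MvPolynomial {p : Fin m × Fin n // p ∉ Z} ℂ |
        ∃ g ∈ minorsSet Z, g ≠ 0 ∧
          ∃ d, IsInitial (degRevLexGT r.lt) g d ∧ mon = MvPolynomial.monomial d 1} =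
      initialIdeal (degRevLexGT r.lt) (Ideal.span (minorsSet Z)) := by
  exact span_initialMonomials_eq_initialIdeal _ fun _ hf _ hu =>
    TwoMinors.exists_isInitial_minor_le (r := r) hf hu
end

section
/- The order complex of the poset {(i,j) : 1 <= i < j <= n+1} ordered by interval containment is shellable; a shelling is given by enumerating the maximal chains (which are monotone lattice paths from some (i,i+1) to (1,n+1) using steps decreasing i by 1 or increasing j by 1) ordered first by their starting point i and then, among paths with the same start, by declaring P before Q if at the first step where they differ P moves north (decreases i) while Q moves east (increases j). -/
/-- The vertices of the order complex: intervals `(i,j)` with `1 ≤ i < j ≤ n+1`. -/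
def IntPos (n : ℕ) := {p : ℕ × ℕ // 1 ≤ p.1 ∧ p.1 < p.2 ∧ p.2 ≤ n + 1}

instance {n : ℕ} : DecidableEq (IntPos n) :=
  fun a b => decidable_of_iff (a.val = b.val) Subtype.ext_iff.symm

/-- Interval containment order: `(i,j) ≼ (k,l)` iff `k ≤ i` and `j ≤ l`. -/
def containRel {n : ℕ} (p q : IntPos n) : Prop :=
  q.val.1 ≤ p.val.1 ∧ p.val.2 ≤ q.val.2

/-- The shelling precedence order on maximal chains (north/east lattice paths):
`F` precedes `G` if at the smallest interval length where the two chains differ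
(including the length-one starting intervals), the interval of `F` lies north of
(has smaller left endpoint than) the interval of `G`. -/
def shellLT {n : ℕ} (F G : Finset (IntPos n)) : Prop :=
  ∃ x ∈ F, ∃ y ∈ G,
    x.val.2 - x.val.1 = y.val.2 - y.val.1 ∧ x.val.1 < y.val.1 ∧
      ∀ z : IntPos n, z.val.2 - z.val.1 < x.val.2 - x.val.1 → (z ∈ F ↔ z ∈ G)

lemma containRel_def {n : ℕ} (p q : IntPos n) :
    containRel p q ↔ q.val.1 ≤ p.val.1 ∧ p.val.2 ≤ q.val.2 := Iff.rfl

lemma rel_of_lt {n : ℕ} {C : Set (IntPos n)} (hC : IsChain containRel C)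
    {u v : IntPos n} (hu : u ∈ C) (hv : v ∈ C)
    (h : u.val.2 - u.val.1 < v.val.2 - v.val.1) : containRel u v := by
  have hup := u.property; have hvp := v.property
  have hne : u ≠ v := by intro he; rw [he] at h; omega
  rcases hC hu hv hne with h1 | h1
  · exact h1
  · obtain ⟨h2, h3⟩ := (containRel_def _ _).1 h1
    exact absurd h (by omega)

lemma eq_of_len_eq {n : ℕ} {C : Set (IntPos n)} (hC : IsChain containRel C)
    {u v : IntPos n} (hu : u ∈ C) (hv : v ∈ C)
    (h : u.val.2 - u.val.1 = v.val.2 - v.val.1) : u = v := by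
  have hup := u.property; have hvp := v.property
  by_contra hne
  have hcomp := hC hu hv hne
  have hval : u.val.1 = v.val.1 ∧ u.val.2 = v.val.2 := by
    rcases hcomp with h1 | h1 <;>
      · obtain ⟨h2, h3⟩ := (containRel_def _ _).1 h1
        omega
  exact hne (Subtype.ext (Prod.ext_iff.2 hval))

lemma top_mem {n : ℕ} {F : Finset (IntPos n)}
    (hF : IsMaxChain containRel (↑F : Set (IntPos n))) (hn : 1 ≤ n) :
    ∃ T ∈ F, T.val = (1, n + 1) := by
  refine ⟨⟨(1, n + 1), by omega⟩, ?_, rfl⟩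
  set T : IntPos n := ⟨(1, n + 1), by omega⟩ with hT
  have hcomp : ∀ u : IntPos n, containRel u T := fun u =>
    (containRel_def _ _).2 ⟨u.property.1, u.property.2.2⟩
  have hchain : IsChain containRel (insert T (↑F : Set (IntPos n))) :=
    hF.1.insert (fun b _ _ => Or.inr (hcomp b))
  have heq := hF.2 hchain (Set.subset_insert _ _)
  have : T ∈ (↑F : Set (IntPos n)) := by rw [heq]; exact Set.mem_insert _ _
  exact Finset.mem_coe.1 this

lemma exists_len {n : ℕ} {F : Finset (IntPos n)}
    (hF : IsMaxChain containRel (↑F : Set (IntPos n))) (hn : 1 ≤ n) :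
    ∀ k, 1 ≤ k → k ≤ n → ∃ z ∈ F, z.val.2 - z.val.1 = k := by
  have step : ∀ k, 1 ≤ k → (∃ z ∈ F, z.val.2 - z.val.1 = k + 1) →
      ∃ z ∈ F, z.val.2 - z.val.1 = k := by
    intro k hk ⟨z, hzF, hz⟩
    by_contra hno
    push_neg at hno
    have hzp := z.property
    have hsmall : ∀ u ∈ F, containRel u z → u ≠ z → u.val.2 - u.val.1 < k := by
      intro u huF hrel hune
      have hup := u.property
      obtain ⟨h1, h2⟩ := (containRel_def _ _).1 hrel
      have h3 : u.val.2 - u.val.1 ≠ k + 1 := fun he =>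
        hune (eq_of_len_eq hF.1 (Finset.mem_coe.2 huF) (Finset.mem_coe.2 hzF) (by omega))
      have h4 := hno u huF
      omega
    by_cases hc : ∃ z0 ∈ F, containRel z0 z ∧ z0 ≠ z ∧ z0.val.1 = z.val.1
    · obtain ⟨z0, hz0F, hz0rel, hz0ne, hz01⟩ := hc
      have hz0p := z0.property
      obtain ⟨hz0a, hz0b⟩ := (containRel_def _ _).1 hz0rel
      have hz0len := hsmall z0 hz0F hz0rel hz0ne
      set w : IntPos n := ⟨(z.val.1, z.val.2 - 1), by omega⟩ with hwdef
      have hw1 : w.val.1 = z.val.1 := rfl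
      have hw2 : w.val.2 = z.val.2 - 1 := rfl
      have hcomp : ∀ b ∈ (↑F : Set (IntPos n)), w ≠ b → containRel w b ∨ containRel b w := by
        intro u huF _
        have hup := u.property
        rcases eq_or_ne u z with rfl | hne
        · exact Or.inl ((containRel_def _ _).2 ⟨by omega, by omega⟩)
        rcases hF.1 huF (Finset.mem_coe.2 hzF) hne with h1 | h1
        · -- u ≼ z
          obtain ⟨ha1, ha2⟩ := (containRel_def _ _).1 h1
          have hulen := hsmall u (Finset.mem_coe.1 huF) h1 hne
          rcases eq_or_ne u z0 with rfl | hne2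
          · exact Or.inr ((containRel_def _ _).2 ⟨by omega, by omega⟩)
          rcases hF.1 huF (Finset.mem_coe.2 hz0F) hne2 with h2 | h2
          · obtain ⟨hb1, hb2⟩ := (containRel_def _ _).1 h2
            exact Or.inr ((containRel_def _ _).2 ⟨by omega, by omega⟩)
          · obtain ⟨hb1, hb2⟩ := (containRel_def _ _).1 h2
            exact Or.inr ((containRel_def _ _).2 ⟨by omega, by omega⟩)
        · -- z ≼ u
          obtain ⟨ha1, ha2⟩ := (containRel_def _ _).1 h1
          exact Or.inl ((containRel_def _ _).2 ⟨by omega, by omega⟩)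
      have hchain : IsChain containRel (insert w (↑F : Set (IntPos n))) := hF.1.insert hcomp
      have heq := hF.2 hchain (Set.subset_insert _ _)
      have hwF : w ∈ F := by
        have : w ∈ (↑F : Set (IntPos n)) := by rw [heq]; exact Set.mem_insert _ _
        exact Finset.mem_coe.1 this
      exact hno w hwF (by omega)
    · push_neg at hc
      set w : IntPos n := ⟨(z.val.1 + 1, z.val.2), by omega⟩ with hwdef
      have hw1 : w.val.1 = z.val.1 + 1 := rfl
      have hw2 : w.val.2 = z.val.2 := rfl
      have hcomp : ∀ b ∈ (↑F : Set (IntPos n)), w ≠ b → containRel w b ∨ containRel b w := by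
        intro u huF _
        have hup := u.property
        rcases eq_or_ne u z with rfl | hne
        · exact Or.inl ((containRel_def _ _).2 ⟨by omega, by omega⟩)
        rcases hF.1 huF (Finset.mem_coe.2 hzF) hne with h1 | h1
        · obtain ⟨ha1, ha2⟩ := (containRel_def _ _).1 h1
          have hu1 := hc u (Finset.mem_coe.1 huF) h1 hne
          exact Or.inr ((containRel_def _ _).2 ⟨by omega, by omega⟩)
        · obtain ⟨ha1, ha2⟩ := (containRel_def _ _).1 h1
          exact Or.inl ((containRel_def _ _).2 ⟨by omega, by omega⟩)
      have hchain : IsChain containRel (insert w (↑F : Set (IntPos n))) := hF.1.insert hcomp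
      have heq := hF.2 hchain (Set.subset_insert _ _)
      have hwF : w ∈ F := by
        have : w ∈ (↑F : Set (IntPos n)) := by rw [heq]; exact Set.mem_insert _ _
        exact Finset.mem_coe.1 this
      exact hno w hwF (by omega)
  intro k h1 h2
  obtain ⟨T, hTF, hTval⟩ := top_mem hF hn
  have hT1 : T.val.1 = 1 := by rw [hTval]
  have hT2 : T.val.2 = n + 1 := by rw [hTval]
  have main : ∀ d, ∀ k, 1 ≤ k → k + d = n → ∃ z ∈ F, z.val.2 - z.val.1 = k := by
    intro d
    induction d with
    | zero => intro k hk1 hk2; exact ⟨T, hTF, by omega⟩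
    | succ d ih =>
      intro k hk1 hk2
      exact step k hk1 (ih (k + 1) (by omega) (by omega))
  exact main (n - k) k h1 (by omega)

lemma maxChain_of_full {n : ℕ} {C : Finset (IntPos n)}
    (hC : IsChain containRel (↑C : Set (IntPos n)))
    (hfull : ∀ k, 1 ≤ k → k ≤ n → ∃ z ∈ C, z.val.2 - z.val.1 = k) :
    IsMaxChain containRel (↑C : Set (IntPos n)) := by
  refine ⟨hC, fun t ht hsub => Set.Subset.antisymm hsub ?_⟩
  intro z hz
  have hzp := z.property
  obtain ⟨c, hcC, hclen⟩ := hfull (z.val.2 - z.val.1) (by omega) (by omega)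
  have : z = c := eq_of_len_eq ht hz (hsub (Finset.mem_coe.2 hcC)) (by omega)
  rw [this]
  exact Finset.mem_coe.2 hcC

lemma exists_boundary {P : ℕ → Prop} {l n : ℕ} (hln : l ≤ n) (hl : P l) (hn : ¬ P n) :
    ∃ m, l ≤ m ∧ m < n ∧ P m ∧ ¬ P (m + 1) := by
  classical
  have hspec : P (Nat.findGreatest P n) := Nat.findGreatest_spec hln hl
  have hle : Nat.findGreatest P n ≤ n := Nat.findGreatest_le n
  have hltn : Nat.findGreatest P n < n := by
    rcases eq_or_lt_of_le hle with he | h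
    · exact absurd (he ▸ hspec) hn
    · exact h
  exact ⟨Nat.findGreatest P n, Nat.le_findGreatest hln hl, hltn, hspec,
    Nat.findGreatest_is_greatest (Nat.lt_succ_self _) (by omega)⟩

/-- The enumeration of the maximal chains of the interval-containment poset by
`shellLT` is a shelling of its order complex: whenever a maximal chain `G`
precedes a maximal chain `F`, there is a maximal chain `H` preceding `F` such
that `F ∩ G ⊆ F ∩ H` and `F ∩ H` is a maximal proper face of `F`. -/
theorem stmt13 (n : ℕ) (F G : Finset (IntPos n))
    (hF : IsMaxChain (containRel (n := n)) ↑F) (hG : IsMaxChain (containRel (n := n)) ↑G)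
    (hGF : shellLT G F) :
    ∃ H : Finset (IntPos n), IsMaxChain (containRel (n := n)) ↑H ∧ shellLT H F ∧
      (F ∩ G) ⊆ (F ∩ H) ∧ (F ∩ H).card + 1 = F.card := by
  classical
  obtain ⟨x, hxG, y, hyF, hlen, hlt, hagree⟩ := hGF
  have hxp := x.property
  have hyp := y.property
  have hn : 1 ≤ n := by omega
  obtain ⟨T, hTF, hTval⟩ := top_mem hF hn
  have hT1 : T.val.1 = 1 := by rw [hTval]
  have hT2 : T.val.2 = n + 1 := by rw [hTval]
  have hTp := T.property
  -- the boundary length m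
  have hPn : ¬ (∃ z ∈ F, z.val.2 - z.val.1 = n ∧ z.val.1 = y.val.1) := by
    rintro ⟨z, hzF, hzlen, hza⟩
    have : z = T :=
      eq_of_len_eq hF.1 (Finset.mem_coe.2 hzF) (Finset.mem_coe.2 hTF) (by omega)
    have : z.val.1 = T.val.1 := by rw [this]
    omega
  obtain ⟨m, hlm, hmltn, hPm, hnP⟩ :=
    exists_boundary (P := fun k => ∃ z ∈ F, z.val.2 - z.val.1 = k ∧ z.val.1 = y.val.1)
      (by omega : y.val.2 - y.val.1 ≤ n) ⟨y, hyF, rfl, rfl⟩ hPn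
  obtain ⟨y0, hy0F, hy0len, hy0a⟩ := hPm
  have hy0p := y0.property
  -- the element of F of length m+1
  obtain ⟨u', hu'F, hu'len⟩ := exists_len hF hn (m + 1) (by omega) (by omega)
  have hu'p := u'.property
  have hu'a : u'.val.1 ≠ y.val.1 := fun h => hnP ⟨u', hu'F, hu'len, h⟩
  obtain ⟨hr1, hr2⟩ := (containRel_def _ _).1
    (rel_of_lt hF.1 (Finset.mem_coe.2 hy0F) (Finset.mem_coe.2 hu'F) (by omega))
  have hu'1 : u'.val.1 = y.val.1 - 1 := by omega
  have hu'2 : u'.val.2 = y.val.1 + m := by omega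
  -- the new element w
  obtain ⟨w, hwval⟩ : ∃ w : IntPos n, w.val = (y.val.1 - 1, y.val.1 + m - 1) :=
    ⟨⟨(y.val.1 - 1, y.val.1 + m - 1), by omega⟩, rfl⟩
  have hw1 : w.val.1 = y.val.1 - 1 := by rw [hwval]
  have hw2 : w.val.2 = y.val.1 + m - 1 := by rw [hwval]
  have hwlen : w.val.2 - w.val.1 = m := by omega
  have hwF : w ∉ F := by
    intro h
    have : w = y0 :=
      eq_of_len_eq hF.1 (Finset.mem_coe.2 h) (Finset.mem_coe.2 hy0F) (by omega)
    have : w.val.1 = y0.val.1 := by rw [this]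
    omega
  -- comparability of w with everything in F except y0
  have hcomp : ∀ u ∈ F, u ≠ y0 → containRel u w ∨ containRel w u := by
    intro u huF hune
    have hup := u.property
    rcases Nat.lt_trichotomy (u.val.2 - u.val.1) m with hkm | hkm | hkm
    · left
      obtain ⟨ha1, hb1⟩ := (containRel_def _ _).1
        (rel_of_lt hF.1 (Finset.mem_coe.2 huF) (Finset.mem_coe.2 hy0F) (by omega))
      rcases Nat.lt_or_ge (u.val.2 - u.val.1) (y.val.2 - y.val.1) with hkl | hkl
      · have huG : u ∈ G := (hagree u (by omega)).2 huF
        obtain ⟨hc1, hc2⟩ := (containRel_def _ _).1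
          (rel_of_lt hG.1 (Finset.mem_coe.2 huG) (Finset.mem_coe.2 hxG) (by omega))
        exact (containRel_def _ _).2 ⟨by omega, by omega⟩
      · have hu1a : u.val.1 ≤ y.val.1 := by
          rcases eq_or_lt_of_le hkl with he | hlt2
          · have : u = y :=
              eq_of_len_eq hF.1 (Finset.mem_coe.2 huF) (Finset.mem_coe.2 hyF) (by omega)
            have : u.val.1 = y.val.1 := by rw [this]
            omega
          · obtain ⟨hc1, hc2⟩ := (containRel_def _ _).1
              (rel_of_lt hF.1 (Finset.mem_coe.2 hyF) (Finset.mem_coe.2 huF) (by omega))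
            omega
        exact (containRel_def _ _).2 ⟨by omega, by omega⟩
    · exact absurd
        (eq_of_len_eq hF.1 (Finset.mem_coe.2 huF) (Finset.mem_coe.2 hy0F) (by omega)) hune
    · right
      have hbound : u.val.1 ≤ y.val.1 - 1 ∧ y.val.1 + m ≤ u.val.2 := by
        rcases Nat.lt_or_ge (m + 1) (u.val.2 - u.val.1) with hk2 | hk2
        · obtain ⟨hc1, hc2⟩ := (containRel_def _ _).1
            (rel_of_lt hF.1 (Finset.mem_coe.2 hu'F) (Finset.mem_coe.2 huF) (by omega))
          omega
        · have : u = u' :=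
            eq_of_len_eq hF.1 (Finset.mem_coe.2 huF) (Finset.mem_coe.2 hu'F) (by omega)
          have h1 : u.val.1 = u'.val.1 := by rw [this]
          have h2 : u.val.2 = u'.val.2 := by rw [this]
          omega
      exact (containRel_def _ _).2 ⟨by omega, by omega⟩
  refine ⟨insert w (F.erase y0), ?_, ?_, ?_, ?_⟩
  · -- maximal chain
    have hHchain : IsChain containRel (↑(insert w (F.erase y0)) : Set (IntPos n)) := by
      rw [Finset.coe_insert]
      refine IsChain.insert ?_ ?_
      · exact hF.1.mono (fun z hz =>
          Finset.mem_coe.2 (Finset.mem_of_mem_erase (Finset.mem_coe.1 hz)))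
      · intro b hb hne
        have hbF : b ∈ F := Finset.mem_of_mem_erase (Finset.mem_coe.1 hb)
        have hbne : b ≠ y0 := Finset.ne_of_mem_erase (Finset.mem_coe.1 hb)
        rcases hcomp b hbF hbne with h | h
        · exact Or.inr h
        · exact Or.inl h
    refine maxChain_of_full hHchain ?_
    intro k h1 h2
    rcases eq_or_ne k m with rfl | hne
    · exact ⟨w, Finset.mem_insert_self _ _, hwlen⟩
    · obtain ⟨z, hzF, hzlen⟩ := exists_len hF hn k h1 h2
      have hzne : z ≠ y0 := fun he => hne (by rw [he] at hzlen; omega)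
      exact ⟨z, Finset.mem_insert_of_mem (Finset.mem_erase.2 ⟨hzne, hzF⟩), hzlen⟩
  · -- shellLT H F
    refine ⟨w, Finset.mem_insert_self _ _, y0, hy0F, by omega, by omega, ?_⟩
    intro z hz
    have hzw : z ≠ w := fun he => by rw [he] at hz; omega
    have hzy0 : z ≠ y0 := fun he => by rw [he] at hz; omega
    constructor
    · intro hzH
      rcases Finset.mem_insert.1 hzH with he | hmem
      · exact absurd he hzw
      · exact Finset.mem_of_mem_erase hmem
    · intro hzF2
      exact Finset.mem_insert_of_mem (Finset.mem_erase.2 ⟨hzy0, hzF2⟩)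
  · -- F ∩ G ⊆ F ∩ H
    intro z hz
    obtain ⟨hzF2, hzG⟩ := Finset.mem_inter.1 hz
    have hy0G : y0 ∉ G := by
      intro hy0G
      rcases eq_or_lt_of_le hlm with he | hlm2
      · have : x = y0 :=
          eq_of_len_eq hG.1 (Finset.mem_coe.2 hxG) (Finset.mem_coe.2 hy0G) (by omega)
        have : x.val.1 = y0.val.1 := by rw [this]
        omega
      · obtain ⟨hc1, hc2⟩ := (containRel_def _ _).1
          (rel_of_lt hG.1 (Finset.mem_coe.2 hxG) (Finset.mem_coe.2 hy0G) (by omega))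
        omega
    have hzy0 : z ≠ y0 := fun he => hy0G (he ▸ hzG)
    exact Finset.mem_inter.2
      ⟨hzF2, Finset.mem_insert_of_mem (Finset.mem_erase.2 ⟨hzy0, hzF2⟩)⟩
  · -- cardinality
    have hFH : F ∩ insert w (F.erase y0) = F.erase y0 := by
      ext z
      simp only [Finset.mem_inter, Finset.mem_insert, Finset.mem_erase]
      constructor
      · rintro ⟨hzF2, rfl | ⟨h1, h2⟩⟩
        · exact absurd hzF2 hwF
        · exact ⟨h1, h2⟩
      · rintro ⟨h1, h2⟩
        exact ⟨h2, Or.inr ⟨h1, h2⟩⟩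
    rw [hFH, Finset.card_erase_add_one hy0F]
end

section
/- The scheme-theoretic intersection of the closure of the minimal nilpotent orbit of sl_{n+1}(C) with the strictly upper triangular subalgebra n^+, i.e., the quotient of C[x_{ij} : i < j] by the ideal of two-by-two minors of the generic strictly upper triangular matrix, is a reduced ring. -/
/-!
The matrices of rank `≤ 1` in `n⁺` are the union, over `c`, of the blocks `u vᵀ` with `u`
supported on rows `≤ c` and `v` on columns `> c`; each block is parametrised by a polynomial
map whose kernel is prime. Modulo the minors, every monomial is `0` or a standard monomial:
its positions form a chain for the entrywise order and all lie in one block (uncross two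
incomparable positions, or kill two positions with `col p ≤ row q`). A standard monomial is
recovered from its multisets of rows and columns, so distinct standard monomials of a block
have distinct images under that block's parametrisation. Hence the ideal of minors is the
intersection of the prime kernels, and is radical.
-/

open MvPolynomial

/-- The strictly-upper-triangular positions of an `(n+1) × (n+1)` matrix. -/
def UpPos (n : ℕ) := {p : Fin (n + 1) × Fin (n + 1) // p.1 < p.2}

/-- The `(i,j)` entry of the generic strictly upper triangular matrix. -/
noncomputable def upEntry (n : ℕ) (i j : Fin (n + 1)) : MvPolynomial (UpPos n) ℂ :=
  open Classical in if h : i < j then X ⟨(i, j), h⟩ else 0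

/-- The ideal generated by the two-by-two minors of the generic strictly upper
triangular matrix. -/
noncomputable def upMinorsIdeal (n : ℕ) : Ideal (MvPolynomial (UpPos n) ℂ) :=
  Ideal.span {f | ∃ i k j l : Fin (n + 1), i < k ∧ j < l ∧
    f = upEntry n i j * upEntry n k l - upEntry n i l * upEntry n k j}

namespace Finsupp

variable {σ : Type*} {m : σ →₀ ℕ} {p q : σ}

theorem exists_eq_add_single_one (hp : p ∈ m.support) : ∃ m', m = m' + single p 1 := by
  obtain ⟨m', hm'⟩ :=
    exists_add_of_le (single_le_iff.2 (Nat.one_le_iff_ne_zero.2 (mem_support_iff.1 hp)))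
  exact ⟨m', hm'.trans (add_comm _ _)⟩

theorem exists_eq_add_single_one_add_single_one (hpq : p ≠ q) (hp : p ∈ m.support)
    (hq : q ∈ m.support) : ∃ m', m = m' + single p 1 + single q 1 := by
  obtain ⟨m₁, rfl⟩ := exists_eq_add_single_one hp
  have hq₁ : q ∈ m₁.support := by simpa [single_apply, hpq] using hq
  obtain ⟨m', rfl⟩ := exists_eq_add_single_one hq₁
  exact ⟨m', add_right_comm _ _ _⟩

end Finsupp

instance (n : ℕ) : PartialOrder (UpPos n) :=
  inferInstanceAs (PartialOrder {p : Fin (n + 1) × Fin (n + 1) // p.1 < p.2})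

namespace UpPos

variable {n : ℕ}

theorem le_def {p q : UpPos n} : p ≤ q ↔ p.1.1 ≤ q.1.1 ∧ p.1.2 ≤ q.1.2 := Iff.rfl

theorem exists_crossing_of_not_isChain {s : Set (UpPos n)} (h : ¬IsChain (· ≤ ·) s) :
    ∃ p ∈ s, ∃ q ∈ s, p.1.1 < q.1.1 ∧ q.1.2 < p.1.2 := by
  simp only [IsChain, Set.Pairwise, le_def, not_forall, not_or, not_and, not_le] at h
  obtain ⟨p, hp, q, hq, -, hpq, hqp⟩ := h
  rcases lt_trichotomy p.1.1 q.1.1 with h | h | h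
  · exact ⟨p, hp, q, hq, h, hpq h.le⟩
  · exact absurd (hpq h.le) (hqp h.ge).asymm
  · exact ⟨q, hq, p, hp, h, hqp h.le⟩

end UpPos

theorem upEntry_of_lt {n : ℕ} {i j : Fin (n + 1)} (h : i < j) :
    upEntry n i j = X ⟨(i, j), h⟩ :=
  dif_pos h

theorem upEntry_of_le {n : ℕ} {i j : Fin (n + 1)} (h : j ≤ i) : upEntry n i j = 0 :=
  dif_neg h.not_gt

theorem upEntry_mul_upEntry_sub_mem {n : ℕ} {i k j l : Fin (n + 1)} (hik : i < k)
    (hjl : j < l) :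
    upEntry n i j * upEntry n k l - upEntry n i l * upEntry n k j ∈ upMinorsIdeal n :=
  Ideal.subset_span ⟨i, k, j, l, hik, hjl, rfl⟩

theorem X_mul_X_mem_upMinorsIdeal {n : ℕ} {p q : UpPos n} (h : p.1.2 ≤ q.1.1) :
    X p * X q ∈ upMinorsIdeal n := by
  have := upEntry_mul_upEntry_sub_mem (n := n) (p.2.trans_le h) (h.trans_lt q.2)
  rwa [upEntry_of_le h, mul_zero, sub_zero, upEntry_of_lt p.2, upEntry_of_lt q.2] at this

theorem X_mul_X_sub_X_mul_X_mem_upMinorsIdeal {n : ℕ} {p q : UpPos n}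
    (h₁ : p.1.1 < q.1.1) (h₂ : q.1.2 < p.1.2) (hpq : p.1.1 < q.1.2) (hqp : q.1.1 < p.1.2) :
    X ⟨(p.1.1, q.1.2), hpq⟩ * X ⟨(q.1.1, p.1.2), hqp⟩ - X p * X q ∈ upMinorsIdeal n := by
  have := upEntry_mul_upEntry_sub_mem (n := n) h₁ h₂
  rwa [upEntry_of_lt hpq, upEntry_of_lt hqp, upEntry_of_lt p.2, upEntry_of_lt q.2] at this

/-- The generic rank-one matrix `u vᵀ` cut down to the block of rows `≤ c` and columns `> c`. -/
noncomputable def blockSpecialization (n : ℕ) (c : Fin (n + 1)) :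
    MvPolynomial (UpPos n) ℂ →ₐ[ℂ] MvPolynomial (Fin (n + 1) ⊕ Fin (n + 1)) ℂ :=
  aeval fun p => if p.1.1 ≤ c ∧ c < p.1.2 then X (.inl p.1.1) * X (.inr p.1.2) else 0

theorem blockSpecialization_upEntry (n : ℕ) (c i j : Fin (n + 1)) :
    blockSpecialization n c (upEntry n i j) =
      if i ≤ c ∧ c < j then X (.inl i) * X (.inr j) else 0 := by
  rcases lt_or_ge i j with h | h
  · rw [upEntry_of_lt h, blockSpecialization]
    exact aeval_X _ _
  · rw [upEntry_of_le h, map_zero, if_neg fun hc => h.not_gt (hc.1.trans_lt hc.2)]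

theorem upMinorsIdeal_le_ker_blockSpecialization (n : ℕ) (c : Fin (n + 1)) :
    upMinorsIdeal n ≤ RingHom.ker (blockSpecialization n c) := by
  rw [upMinorsIdeal, Ideal.span_le]
  rintro f ⟨i, k, j, l, hik, hjl, rfl⟩
  have hblock : ((i ≤ c ∧ c < j) ∧ k ≤ c ∧ c < l) ↔ ((i ≤ c ∧ c < l) ∧ k ≤ c ∧ c < j) :=
    ⟨fun ⟨⟨hi, hj⟩, hk, _⟩ => ⟨⟨hi, hj.trans hjl⟩, hk, hj⟩,
      fun ⟨⟨hi, _⟩, hk, hj⟩ => ⟨⟨hi, hj⟩, hk, hj.trans hjl⟩⟩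
  simp only [SetLike.mem_coe, RingHom.mem_ker, map_sub, map_mul, blockSpecialization_upEntry,
    ite_zero_mul_ite_zero, hblock]
  rw [sub_eq_zero]
  congr 1
  ring

def IsStandard {n : ℕ} (m : UpPos n →₀ ℕ) : Prop :=
  IsChain (· ≤ ·) (m.support : Set (UpPos n)) ∧
    ∀ p ∈ m.support, ∀ q ∈ m.support, p.1.1 < q.1.2

theorem IsStandard.mono {n : ℕ} {m m' : UpPos n →₀ ℕ} (hm : IsStandard m)
    (h : m'.support ⊆ m.support) : IsStandard m' :=
  ⟨hm.1.mono (Finset.coe_subset.2 h), fun p hp q hq => hm.2 p (h hp) q (h hq)⟩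

theorem IsStandard.exists_block {n : ℕ} {m : UpPos n →₀ ℕ} (hm : IsStandard m) :
    ∃ c, ∀ p ∈ m.support, p.1.1 ≤ c ∧ c < p.1.2 :=
  ⟨m.support.sup fun p => p.1.1, fun p hp => ⟨Finset.le_sup (f := fun p : UpPos n => p.1.1) hp,
    (Finset.sup_lt_iff (bot_le.trans_lt p.2)).2 fun q hq => hm.2 q hq p hp⟩⟩

theorem IsStandard.exists_isLeast {n : ℕ} {m : UpPos n →₀ ℕ} (hm : IsStandard m)
    (h0 : m ≠ 0) : ∃ p, IsLeast (m.support : Set (UpPos n)) p := by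
  obtain ⟨p, hp⟩ := m.support.finite_toSet.exists_minimal
    (Finset.coe_nonempty.2 (Finsupp.support_nonempty_iff.2 h0))
  exact ⟨p, hp.1, fun q hq => (hm.1.total hp.1 hq).elim id (hp.2 hq)⟩

theorem monomial_mem_restrictSupport_isStandard {n : ℕ} {m : UpPos n →₀ ℕ}
    (hm : IsStandard m) :
    (monomial m 1 : MvPolynomial (UpPos n) ℂ) ∈ restrictSupport ℂ {s | IsStandard s} := by
  rw [mem_restrictSupport_iff]
  exact (Finset.coe_subset.2 support_monomial_subset).trans (by simpa using hm)

theorem monomial_mem_upMinorsIdeal {n : ℕ} {m : UpPos n →₀ ℕ} {p q : UpPos n}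
    (hp : p ∈ m.support) (hq : q ∈ m.support) (h : p.1.2 ≤ q.1.1) :
    (monomial m 1 : MvPolynomial (UpPos n) ℂ) ∈ upMinorsIdeal n := by
  have hpq : p ≠ q := by
    rintro rfl
    exact h.not_gt p.2
  obtain ⟨m', rfl⟩ := Finsupp.exists_eq_add_single_one_add_single_one hpq hp hq
  rw [monomial_add_single, monomial_add_single, pow_one, pow_one, mul_assoc]
  exact Ideal.mul_mem_left _ _ (X_mul_X_mem_upMinorsIdeal h)

/-- Uncrossing `(i, l), (k, j)` with `i < k`, `j < l` into `(i, j), (k, l)` lowers the weight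
by `(k - i) * (rev j - rev l) > 0`. -/
noncomputable def straighteningWeight (n : ℕ) : (UpPos n →₀ ℕ) →+ ℕ :=
  Finsupp.weight fun p => (p.1.1 : ℕ) * p.1.2.rev

theorem exists_uncross {n : ℕ} {m : UpPos n →₀ ℕ} {p q : UpPos n}
    (hp : p ∈ m.support) (hq : q ∈ m.support)
    (hm : ∀ p ∈ m.support, ∀ q ∈ m.support, p.1.1 < q.1.2)
    (h₁ : p.1.1 < q.1.1) (h₂ : q.1.2 < p.1.2) :
    ∃ m' : UpPos n →₀ ℕ, straighteningWeight n m' < straighteningWeight n m ∧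
      (monomial m 1 - monomial m' 1 : MvPolynomial (UpPos n) ℂ) ∈ upMinorsIdeal n := by
  have hpq : p ≠ q := fun h => h₁.ne (congrArg (·.1.1) h)
  have hmem := X_mul_X_sub_X_mul_X_mem_upMinorsIdeal h₁ h₂ (hm p hp q hq) (hm q hq p hp)
  let a : UpPos n := ⟨(p.1.1, q.1.2), hm p hp q hq⟩
  let b : UpPos n := ⟨(q.1.1, p.1.2), hm q hq p hp⟩
  obtain ⟨m₀, rfl⟩ := Finsupp.exists_eq_add_single_one_add_single_one hpq hp hq
  refine ⟨m₀ + Finsupp.single a 1 + Finsupp.single b 1, ?_, ?_⟩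
  · have hrow : (p.1.1 : ℕ) < q.1.1 := h₁
    have hrev : (p.1.2.rev : ℕ) < q.1.2.rev := Fin.rev_lt_rev.2 h₂
    simp only [map_add, straighteningWeight, Finsupp.weight_single, one_smul]
    nlinarith
  · simp only [monomial_add_single, pow_one]
    convert neg_mem (Ideal.mul_mem_left _ (monomial m₀ 1) hmem) using 1
    ring

theorem exists_standard_sub_mem_of_monomial {n : ℕ} (m : UpPos n →₀ ℕ) :
    ∃ g ∈ restrictSupport ℂ {s | IsStandard s},
      (monomial m 1 : MvPolynomial (UpPos n) ℂ) - g ∈ upMinorsIdeal n := by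
  induction h : straighteningWeight n m using Nat.strong_induction_on generalizing m with
  | _ w ih =>
  by_cases hsep : ∀ p ∈ m.support, ∀ q ∈ m.support, p.1.1 < q.1.2
  · by_cases hchain : IsChain (· ≤ ·) (m.support : Set (UpPos n))
    · refine ⟨_, monomial_mem_restrictSupport_isStandard ⟨hchain, hsep⟩, ?_⟩
      rw [sub_self]
      exact zero_mem _
    obtain ⟨p, hp, q, hq, h₁, h₂⟩ := UpPos.exists_crossing_of_not_isChain hchain
    obtain ⟨m', hlt, hmem⟩ := exists_uncross hp hq hsep h₁ h₂
    obtain ⟨g, hg, hsub⟩ := ih _ (h ▸ hlt) m' rfl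
    exact ⟨g, hg, by simpa using add_mem hmem hsub⟩
  · push Not at hsep
    obtain ⟨q, hq, p, hp, h⟩ := hsep
    exact ⟨0, zero_mem _, by rw [sub_zero]; exact monomial_mem_upMinorsIdeal hp hq h⟩

theorem exists_standard_sub_mem {n : ℕ} (f : MvPolynomial (UpPos n) ℂ) :
    ∃ g ∈ restrictSupport ℂ {s | IsStandard s}, f - g ∈ upMinorsIdeal n := by
  induction f using MvPolynomial.induction_on' with
  | monomial m a =>
    obtain ⟨g, hg, hsub⟩ := exists_standard_sub_mem_of_monomial m
    refine ⟨a • g, Submodule.smul_mem _ a hg, ?_⟩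
    rw [smul_eq_C_mul, ← mul_one a, ← C_mul_monomial, mul_one, ← mul_sub]
    exact Ideal.mul_mem_left _ _ hsub
  | add f₁ f₂ ih₁ ih₂ =>
    obtain ⟨g₁, hg₁, h₁⟩ := ih₁
    obtain ⟨g₂, hg₂, h₂⟩ := ih₂
    refine ⟨g₁ + g₂, add_mem hg₁ hg₂, ?_⟩
    convert add_mem h₁ h₂ using 1
    ring

noncomputable def rowColExponent (n : ℕ) :
    (UpPos n →₀ ℕ) →+ (Fin (n + 1) ⊕ Fin (n + 1) →₀ ℕ) :=
  Finsupp.weight fun p => Finsupp.single (.inl p.1.1) 1 + Finsupp.single (.inr p.1.2) 1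

theorem rowColExponent_inl_ne_zero_iff {n : ℕ} {m : UpPos n →₀ ℕ} {i : Fin (n + 1)} :
    rowColExponent n m (.inl i) ≠ 0 ↔ ∃ p ∈ m.support, p.1.1 = i := by
  simp [rowColExponent, Finsupp.weight_apply, Finsupp.sum, Finsupp.single_apply, and_left_comm,
    and_comm]

theorem rowColExponent_inr_ne_zero_iff {n : ℕ} {m : UpPos n →₀ ℕ} {j : Fin (n + 1)} :
    rowColExponent n m (.inr j) ≠ 0 ↔ ∃ p ∈ m.support, p.1.2 = j := by
  simp [rowColExponent, Finsupp.weight_apply, Finsupp.sum, Finsupp.single_apply, and_left_comm,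
    and_comm]

theorem rowColExponent_eq_zero_iff {n : ℕ} {m : UpPos n →₀ ℕ} :
    rowColExponent n m = 0 ↔ m = 0 := by
  refine ⟨fun h => ?_, fun h => h ▸ map_zero _⟩
  by_contra hm
  obtain ⟨p, hp⟩ := Finsupp.support_nonempty_iff.2 hm
  exact rowColExponent_inl_ne_zero_iff.2 ⟨p, hp, rfl⟩ (by rw [h, Finsupp.zero_apply])

theorem IsLeast.le_of_rowColExponent_eq {n : ℕ} {s t : UpPos n →₀ ℕ} {p q : UpPos n}
    (hp : IsLeast (s.support : Set (UpPos n)) p) (hq : q ∈ t.support)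
    (h : rowColExponent n s = rowColExponent n t) : p ≤ q := by
  obtain ⟨p₁, hp₁, hrow⟩ :=
    rowColExponent_inl_ne_zero_iff.1 (h ▸ rowColExponent_inl_ne_zero_iff.2 ⟨q, hq, rfl⟩)
  obtain ⟨p₂, hp₂, hcol⟩ :=
    rowColExponent_inr_ne_zero_iff.1 (h ▸ rowColExponent_inr_ne_zero_iff.2 ⟨q, hq, rfl⟩)
  exact ⟨hrow ▸ (hp.2 hp₁).1, hcol ▸ (hp.2 hp₂).2⟩

theorem IsStandard.eq_of_rowColExponent_eq {n : ℕ} {s t : UpPos n →₀ ℕ} (hs : IsStandard s)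
    (ht : IsStandard t) (h : rowColExponent n s = rowColExponent n t) : s = t := by
  induction s using WellFoundedLT.induction generalizing t with
  | _ s ih =>
  rcases eq_or_ne s 0 with rfl | hs0
  · rw [map_zero, eq_comm, rowColExponent_eq_zero_iff] at h
    exact h.symm
  have ht0 : t ≠ 0 := by
    rintro rfl
    rw [map_zero, rowColExponent_eq_zero_iff] at h
    exact hs0 h
  obtain ⟨p, hp⟩ := hs.exists_isLeast hs0
  obtain ⟨q, hq⟩ := ht.exists_isLeast ht0
  obtain rfl : p = q :=
    le_antisymm (hp.le_of_rowColExponent_eq hq.1 h) (hq.le_of_rowColExponent_eq hp.1 h.symm)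
  obtain ⟨s', rfl⟩ := Finsupp.exists_eq_add_single_one hp.1
  obtain ⟨t', rfl⟩ := Finsupp.exists_eq_add_single_one hq.1
  rw [map_add, map_add, add_left_inj] at h
  have hlt : s' < s' + Finsupp.single p 1 :=
    lt_add_of_pos_right _ (pos_iff_ne_zero.2 (Finsupp.single_ne_zero.2 one_ne_zero))
  rw [ih s' hlt (hs.mono (Finsupp.support_mono le_self_add))
    (ht.mono (Finsupp.support_mono le_self_add)) h]

theorem blockSpecialization_monomial (n : ℕ) (c : Fin (n + 1)) (m : UpPos n →₀ ℕ) (a : ℂ) :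
    blockSpecialization n c (monomial m a) =
      if ∀ p ∈ m.support, p.1.1 ≤ c ∧ c < p.1.2 then monomial (rowColExponent n m) a
      else 0 := by
  rw [blockSpecialization, aeval_monomial, Finsupp.prod, algebraMap_eq]
  split_ifs with hm
  · rw [rowColExponent, Finsupp.weight_apply, monomial_finsupp_sum_index, Finsupp.prod]
    refine congrArg (C a * ·) (Finset.prod_congr rfl fun p hp => ?_)
    rw [if_pos (hm p hp), X, X, monomial_mul, mul_one, monomial_pow, one_pow]
  · push Not at hm
    obtain ⟨p, hp, hc⟩ := hm
    refine mul_eq_zero_of_right _ (Finset.prod_eq_zero hp ?_)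
    rw [if_neg fun h => (hc h.1).not_gt h.2, zero_pow (Finsupp.mem_support_iff.1 hp)]

theorem eq_zero_of_forall_blockSpecialization_eq_zero {n : ℕ} {g : MvPolynomial (UpPos n) ℂ}
    (hg : g ∈ restrictSupport ℂ {s | IsStandard s}) (h : ∀ c, blockSpecialization n c g = 0) :
    g = 0 := by
  ext s
  by_contra hs
  have hstd : IsStandard s := hg (mem_support_iff.2 hs)
  obtain ⟨c, hc⟩ := hstd.exists_block
  have hcoeff : coeff (rowColExponent n s) (blockSpecialization n c g) = coeff s g := by
    conv_lhs => rw [g.as_sum, map_sum, coeff_sum]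
    rw [Finset.sum_eq_single s, blockSpecialization_monomial, if_pos hc, coeff_monomial,
      if_pos rfl]
    · intro t ht hts
      rw [blockSpecialization_monomial]
      split_ifs
      · rw [coeff_monomial, if_neg fun h => hts ((hg ht).eq_of_rowColExponent_eq hstd h)]
      · rw [coeff_zero]
    · exact fun hs' => (hs' (mem_support_iff.2 hs)).elim
  rw [h c, coeff_zero] at hcoeff
  exact hs hcoeff.symm

theorem upMinorsIdeal_eq_iInf_ker_blockSpecialization (n : ℕ) :
    upMinorsIdeal n = ⨅ c, RingHom.ker (blockSpecialization n c) := by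
  refine le_antisymm (le_iInf (upMinorsIdeal_le_ker_blockSpecialization n)) fun f hf => ?_
  obtain ⟨g, hg, hfg⟩ := exists_standard_sub_mem f
  suffices g = 0 by rwa [this, sub_zero] at hfg
  refine eq_zero_of_forall_blockSpecialization_eq_zero hg fun c => ?_
  have hfg_c := upMinorsIdeal_le_ker_blockSpecialization n c hfg
  rwa [RingHom.mem_ker, map_sub, RingHom.mem_ker.1 (Ideal.mem_iInf.1 hf c), zero_sub,
    neg_eq_zero] at hfg_c

/-- The coordinate ring of the scheme-theoretic intersection
`closure(O_min) ∩ n⁺`, i.e. the quotient of `ℂ[x_{ij} : i < j]` by the ideal of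
two-by-two minors of the generic strictly upper triangular matrix, is reduced. -/
theorem stmt15 (n : ℕ) :
    IsReduced (MvPolynomial (UpPos n) ℂ ⧸ upMinorsIdeal n) := by
  rw [← Ideal.isRadical_iff_quotient_reduced, upMinorsIdeal_eq_iInf_ker_blockSpecialization]
  exact Ideal.isRadical_iInf _ fun c => (RingHom.ker_isPrime _).isRadical
end
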